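/- For the ultraspherical function $\tX_{\ell,m}^d(x) = c_{\ell m}(1-x^2)^{m/2-(d-2)/4} P_{\ell-m-1/2}^{(m,m)}(x)$ with normalization $c_{\ell m} = \frac{[\ell\,\Gamma(\ell-m+1/2)\,\Gamma(\ell+m+1/2)]^{1/2}}{2^m\,\Gamma(\ell+1/2)}$, one has the three-term recurrence $x\,\tX_{\ell,m}^d(x) = \alpha_{\ell,m}\,\tX_{\ell+1,m}^d(x) + \alpha_{\ell-1,m}\,\tX_{\ell-1,m}^d(x)$, where $\alpha_{\ell,m} = \sqrt{\frac{(\ell-m+1/2)(\ell+m+1/2)}{4\ell(\ell+1)}}$, for all $(\ell,m)$ with $\ell \in \mathbb{N}+(d-1)/2$, $m \in \mathbb{N}+(d-2)/2$, $\ell \ge m$. -/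

import Mathlib

/-- The Jacobi polynomial `P_j^{(α,β)}`, defined via Rodrigues' formula. -/
noncomputable def jacobiP (j : ℕ) (a b : ℝ) (x : ℝ) : ℝ :=
  ((-1 : ℝ) ^ j / (2 ^ j * (Nat.factorial j : ℝ)))
    * (1 - x) ^ (-a) * (1 + x) ^ (-b)
    * iteratedDeriv j (fun t : ℝ => (1 - t) ^ (a + j) * (1 + t) ^ (b + j)) x

/-- The normalization constant `c_{ℓm}`. -/
noncomputable def cX (ℓ m : ℝ) : ℝ :=
  Real.sqrt (ℓ * Real.Gamma (ℓ - m + 1/2) * Real.Gamma (ℓ + m + 1/2))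
    / ((2 : ℝ) ^ m * Real.Gamma (ℓ + 1/2))

/-- The normalized ultraspherical function
`X̃_{ℓ,m}^d(x) = c_{ℓm} (1-x²)^{m/2-(d-2)/4} P_{ℓ-m-1/2}^{(m,m)}(x)`. -/
noncomputable def tX (d : ℕ) (ℓ m : ℝ) (x : ℝ) : ℝ :=
  cX ℓ m * (1 - x ^ 2) ^ (m / 2 - ((d : ℝ) - 2) / 4)
    * jacobiP ⌊ℓ - m - 1/2⌋₊ m m x

/-- The recurrence coefficient `α_{ℓ,m} = √(((ℓ-m+1/2)(ℓ+m+1/2))/(4ℓ(ℓ+1)))`. -/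
noncomputable def αX (ℓ m : ℝ) : ℝ :=
  Real.sqrt ((ℓ - m + 1/2) * (ℓ + m + 1/2) / (4 * ℓ * (ℓ + 1)))

open Real Set Filter Topology

/-! ### Auxiliary development -/

noncomputable def Ff (β : ℝ) : ℝ → ℝ := fun t => (1 - t) ^ β * (1 + t) ^ β

noncomputable def GG (α : ℝ) (n : ℕ) : ℝ → ℝ := iteratedDeriv n (Ff (α + n))
noncomputable def KK (α : ℝ) (n : ℕ) : ℝ → ℝ := iteratedDeriv (n+1) (Ff (α + n))
noncomputable def hh (α : ℝ) (n : ℕ) : ℝ → ℝ := iteratedDeriv (n-1) (Ff (α + n))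

lemma Ff_contDiffAt (β : ℝ) {t : ℝ} (ht : t ∈ Ioo (-1:ℝ) 1) :
    ContDiffAt ℝ (⊤ : ℕ∞) (Ff β) t := by
  have h1 : (1:ℝ) - t ≠ 0 := by intro h; linarith [ht.2, sub_eq_zero.mp h]
  have h2 : (1:ℝ) + t ≠ 0 := by intro h; have := ht.1; nlinarith
  have c1 : ContDiffAt ℝ (⊤ : ℕ∞) (fun u : ℝ => (1 - u) ^ β) t :=
    (Real.contDiffAt_rpow_const_of_ne h1).comp t (contDiffAt_const.sub contDiffAt_id)
  have c2 : ContDiffAt ℝ (⊤ : ℕ∞) (fun u : ℝ => (1 + u) ^ β) t :=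
    (Real.contDiffAt_rpow_const_of_ne h2).comp t (contDiffAt_const.add contDiffAt_id)
  exact c1.mul c2

lemma Ff_contDiffOn (β : ℝ) : ContDiffOn ℝ (⊤ : ℕ∞) (Ff β) (Ioo (-1:ℝ) 1) :=
  fun _ ht => (Ff_contDiffAt β ht).contDiffWithinAt

lemma iterWithin_eq (f : ℝ → ℝ) {s : Set ℝ} (hs : IsOpen s) (n : ℕ) {t : ℝ} (ht : t ∈ s) :
    iteratedDerivWithin n f s t = iteratedDeriv n f t := by
  rw [iteratedDerivWithin_eq_iteratedFDerivWithin, iteratedDeriv_eq_iteratedFDeriv,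
    iteratedFDerivWithin_of_isOpen n hs ht]

lemma diffAt_iter {f : ℝ → ℝ} {s : Set ℝ} (hs : IsOpen s) (hf : ContDiffOn ℝ (⊤ : ℕ∞) f s)
    (k : ℕ) {t : ℝ} (ht : t ∈ s) : DifferentiableAt ℝ (iteratedDeriv k f) t := by
  have h1 : DifferentiableOn ℝ (iteratedDerivWithin k f s) s :=
    hf.differentiableOn_iteratedDerivWithin (by exact_mod_cast WithTop.coe_lt_top _)
      hs.uniqueDiffOn
  have h2 : DifferentiableAt ℝ (iteratedDerivWithin k f s) t :=
    (h1 t ht).differentiableAt (hs.mem_nhds ht)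
  refine h2.congr_of_eventuallyEq ?_
  filter_upwards [hs.mem_nhds ht] with u hu
  exact (iterWithin_eq f hs k hu).symm

lemma lin_leibniz {f : ℝ → ℝ} {s : Set ℝ} (hs : IsOpen s) (hf : ContDiffOn ℝ (⊤ : ℕ∞) f s)
    (p q : ℝ) :
    ∀ n : ℕ, ∀ t ∈ s, iteratedDeriv n (fun u => (p + q * u) * f u) t
      = (p + q * t) * iteratedDeriv n f t + n * q * iteratedDeriv (n - 1) f t := by
  intro n
  induction n with
  | zero => intro t _; simp
  | succ n ih =>
    intro t ht
    rw [iteratedDeriv_succ]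
    have hev : deriv (iteratedDeriv n (fun u => (p + q * u) * f u)) t
        = deriv (fun u => (p + q * u) * iteratedDeriv n f u
            + n * q * iteratedDeriv (n - 1) f u) t := by
      apply Filter.EventuallyEq.deriv_eq
      filter_upwards [hs.mem_nhds ht] with u hu
      exact ih u hu
    rw [hev]
    have d1 : HasDerivAt (fun u : ℝ => p + q * u) q t := by
      simpa using ((hasDerivAt_id t).const_mul q).const_add p
    have d2 : HasDerivAt (iteratedDeriv n f) (iteratedDeriv (n + 1) f t) t := by
      have := (diffAt_iter hs hf n ht).hasDerivAt
      rwa [← iteratedDeriv_succ] at this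
    have d3 : HasDerivAt (fun u => (n : ℝ) * q * iteratedDeriv (n - 1) f u)
        ((n : ℝ) * q * iteratedDeriv n f t) t := by
      cases n with
      | zero => simpa using hasDerivAt_const t (0 : ℝ)
      | succ k =>
        have h := (diffAt_iter hs hf k ht).hasDerivAt.const_mul (((k+1 : ℕ) : ℝ) * q)
        rw [← iteratedDeriv_succ] at h
        simpa using h
    have := ((d1.mul d2).add d3).deriv
    exact this.trans (by push_cast; ring)

lemma Ff_hasDerivAt (β : ℝ) {t : ℝ} (ht : t ∈ Ioo (-1:ℝ) 1) :
    HasDerivAt (Ff (β + 1)) (-(2 * (β + 1)) * (t * Ff β t)) t := by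
  have h1 : (0:ℝ) < 1 - t := by linarith [ht.2]
  have h2 : (0:ℝ) < 1 + t := by linarith [ht.1]
  have d1 : HasDerivAt (fun u : ℝ => (1 - u) ^ (β + 1))
      ((β + 1) * (1 - t) ^ β * (-1)) t := by
    have hb : HasDerivAt (fun u : ℝ => 1 - u) (-1) t := by
      simpa using (hasDerivAt_id t).const_sub 1
    have := (Real.hasDerivAt_rpow_const (p := β + 1) (Or.inl h1.ne')).comp t hb
    simpa [add_sub_cancel_right, Function.comp_def] using this
  have d2 : HasDerivAt (fun u : ℝ => (1 + u) ^ (β + 1))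
      ((β + 1) * (1 + t) ^ β * 1) t := by
    have hb : HasDerivAt (fun u : ℝ => 1 + u) (1) t := by
      simpa using (hasDerivAt_id t).const_add 1
    have := (Real.hasDerivAt_rpow_const (p := β + 1) (Or.inl h2.ne')).comp t hb
    simpa [add_sub_cancel_right, Function.comp_def] using this
  have := d1.mul d2
  have e1 : (1 - t) ^ (β + 1) = (1 - t) ^ β * (1 - t) := Real.rpow_add_one h1.ne' β
  have e2 : (1 + t) ^ (β + 1) = (1 + t) ^ β * (1 + t) := Real.rpow_add_one h2.ne' β
  refine this.congr_deriv ?_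
  rw [e1, e2]
  simp only [Ff]
  ring

lemma deriv_Ff_eventually (β : ℝ) {t : ℝ} (ht : t ∈ Ioo (-1:ℝ) 1) :
    deriv (Ff (β + 1)) =ᶠ[𝓝 t] fun u => (0 + (-(2 * (β + 1))) * u) * Ff β u := by
  filter_upwards [isOpen_Ioo.mem_nhds ht] with u hu
  rw [(Ff_hasDerivAt β hu).deriv]; ring

lemma lemA (α : ℝ) (n : ℕ) {t : ℝ} (ht : t ∈ Ioo (-1:ℝ) 1) :
    GG α (n+1) t = -(2 * (α + n + 1)) * (t * GG α n t + n * hh α n t) := by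
  have hcast : α + ((n:ℝ) + 1) = (α + n) + 1 := by ring
  have : GG α (n+1) t = iteratedDeriv n (deriv (Ff ((α + n) + 1))) t := by
    rw [GG]; push_cast; rw [hcast, iteratedDeriv_succ']
  rw [this, Filter.EventuallyEq.iteratedDeriv_eq n (deriv_Ff_eventually (α + n) ht),
    lin_leibniz isOpen_Ioo (Ff_contDiffOn (α + n)) 0 (-(2 * (α + n + 1))) n t ht]
  rw [GG, hh]; ring

lemma lemB (α : ℝ) (n : ℕ) {t : ℝ} (ht : t ∈ Ioo (-1:ℝ) 1) :
    GG α (n+1) t = (1 - t^2) * KK α n t - 2*(n+1)*t*GG α n t - n*(n+1)*hh α n t := by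
  have h1 : (0:ℝ) < 1 - t := by linarith [ht.2]
  have h2 : (0:ℝ) < 1 + t := by linarith [ht.1]
  have hg : ContDiffOn ℝ (⊤ : ℕ∞) (fun u => (1 + 1 * u) * Ff (α + n) u) (Ioo (-1:ℝ) 1) := by
    apply ContDiffOn.mul _ (Ff_contDiffOn (α + n))
    exact (contDiffOn_const.add (contDiffOn_const.mul contDiffOn_id))
  have hev : Ff (α + ((n+1 : ℕ) : ℝ)) =ᶠ[𝓝 t]
      fun u => (1 + (-1) * u) * ((1 + 1 * u) * Ff (α + n) u) := by
    filter_upwards [isOpen_Ioo.mem_nhds ht] with u hu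
    have hu1 : (0:ℝ) < 1 - u := by linarith [hu.2]
    have hu2 : (0:ℝ) < 1 + u := by linarith [hu.1]
    have hc : α + ((n+1 : ℕ) : ℝ) = (α + n) + 1 := by push_cast; ring
    rw [Ff, hc]
    show (1 - u) ^ ((α + n) + 1) * (1 + u) ^ ((α + n) + 1) = _
    rw [Real.rpow_add_one hu1.ne' (α + n), Real.rpow_add_one hu2.ne' (α + n)]
    show _ = (1 + (-1) * u) * ((1 + 1 * u) * ((1 - u) ^ (α + n) * (1 + u) ^ (α + n)))
    ring
  have key : GG α (n+1) t = iteratedDeriv (n+1)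
      (fun u => (1 + (-1) * u) * ((1 + 1 * u) * Ff (α + n) u)) t :=
    Filter.EventuallyEq.iteratedDeriv_eq (n+1) hev
  rw [key, lin_leibniz isOpen_Ioo hg 1 (-1) (n+1) t ht]
  have e1 : iteratedDeriv (n+1) (fun u => (1 + 1 * u) * Ff (α + n) u) t
      = (1 + 1 * t) * iteratedDeriv (n+1) (Ff (α + n)) t
        + (n+1) * 1 * iteratedDeriv n (Ff (α + n)) t := by
    have := lin_leibniz isOpen_Ioo (Ff_contDiffOn (α + n)) 1 1 (n+1) t ht
    simpa using this
  have e2 : iteratedDeriv n (fun u => (1 + 1 * u) * Ff (α + n) u) t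
      = (1 + 1 * t) * iteratedDeriv n (Ff (α + n)) t
        + n * 1 * iteratedDeriv (n-1) (Ff (α + n)) t :=
    lin_leibniz isOpen_Ioo (Ff_contDiffOn (α + n)) 1 1 n t ht
  simp only [Nat.add_sub_cancel] at *
  rw [e1, e2, GG, KK, hh]
  push_cast
  ring

lemma lemD (α : ℝ) (k : ℕ) {t : ℝ} (ht : t ∈ Ioo (-1:ℝ) 1) :
    KK α (k+1) t = -(2 * (α + k + 1)) * (t * KK α k t + (k+1) * GG α k t) := by
  have hcast : α + ((k+1 : ℕ) : ℝ) = (α + k) + 1 := by push_cast; ring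
  have h0 : KK α (k+1) t = iteratedDeriv (k+1) (deriv (Ff ((α + k) + 1))) t := by
    rw [KK, hcast, iteratedDeriv_succ']
  rw [h0, Filter.EventuallyEq.iteratedDeriv_eq (k+1) (deriv_Ff_eventually (α + k) ht),
    lin_leibniz isOpen_Ioo (Ff_contDiffOn (α + k)) 0 (-(2 * (α + k + 1))) (k+1) t ht]
  simp only [Nat.add_sub_cancel]
  rw [GG, KK]
  push_cast
  ring

lemma Grec (α : ℝ) (k : ℕ) {t : ℝ} (ht : t ∈ Ioo (-1:ℝ) 1) :
    (2*α + (k:ℝ) + 2) * GG α (k+2) t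
      = -(2*(α+k+2)*(2*α+2*(k:ℝ)+3)) * (t * GG α (k+1) t)
        - 4*((k:ℝ)+1)*(α+k+1)*(α+k+2) * GG α k t := by
  have hA := lemA α (k+1) ht
  have hB := lemB α (k+1) ht
  have hA' := lemA α k ht
  have hB' := lemB α k ht
  have hD := lemD α k ht
  push_cast at hA hB hA' hB' hD ⊢
  linear_combination (2*(α+k+2))*hB - ((k:ℝ)+2)*hA + (2*(α+k+2)*(1-t^2))*hD
    + (4*(α+k+2)*t*(α+k+1))*hB' - (2*(α+k+2)*t*((k:ℝ)+1))*hA'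

lemma Gconv (m : ℝ) (j : ℕ) {x : ℝ} (hx : x ∈ Ioo (-1:ℝ) 1) :
    GG m j x = (-1:ℝ)^j * 2^j * (Nat.factorial j : ℝ)
      * ((1-x)^m * (1+x)^m) * jacobiP j m m x := by
  have h1 : (0:ℝ) < 1 - x := by linarith [hx.2]
  have h2 : (0:ℝ) < 1 + x := by linarith [hx.1]
  have w1 : ((1-x):ℝ)^(m:ℝ) * (1-x)^(-m) = 1 := by
    rw [← Real.rpow_add h1]; simp
  have w2 : ((1+x):ℝ)^(m:ℝ) * (1+x)^(-m) = 1 := by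
    rw [← Real.rpow_add h2]; simp
  rw [jacobiP]
  rw [show (fun t : ℝ => (1 - t) ^ (m + (j:ℝ)) * (1 + t) ^ (m + (j:ℝ))) = Ff (m + (j:ℝ))
    from rfl]
  rw [show iteratedDeriv j (Ff (m + (j:ℝ))) x = GG m j x from rfl]
  set g := GG m j x
  have hneg : ((-1:ℝ)^j) * ((-1:ℝ)^j) = 1 := by
    rw [← mul_pow]; norm_num
  have h2j : ((2:ℝ)^j * (Nat.factorial j : ℝ)) ≠ 0 := by positivity
  have key : (-1:ℝ)^j * 2^j * (Nat.factorial j : ℝ) * ((1-x)^m * (1+x)^m)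
      * (((-1:ℝ)^j / (2^j * (Nat.factorial j : ℝ))) * (1-x)^(-m) * (1+x)^(-m) * g)
      = (((-1:ℝ)^j * (-1:ℝ)^j) * ((2^j * (Nat.factorial j : ℝ))/(2^j * (Nat.factorial j : ℝ))))
        * (((1-x)^(m:ℝ) * (1-x)^(-m)) * (((1+x):ℝ)^(m:ℝ) * (1+x)^(-m))) * g := by
    ring
  rw [key, hneg, w1, w2, div_self h2j]
  ring

lemma Prec (m : ℝ) (k : ℕ) {x : ℝ} (hx : x ∈ Ioo (-1:ℝ) 1) :
    (m+k+2)*(2*m+2*(k:ℝ)+3) * (x * jacobiP (k+1) m m x)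
      = ((k:ℝ)+2)*(2*m+(k:ℝ)+2) * jacobiP (k+2) m m x
        + (m+k+1)*(m+k+2) * jacobiP k m m x := by
  have h1 : (0:ℝ) < 1 - x := by linarith [hx.2]
  have h2 : (0:ℝ) < 1 + x := by linarith [hx.1]
  have hW : (0:ℝ) < (1-x)^(m:ℝ) * (1+x)^(m:ℝ) :=
    mul_pos (Real.rpow_pos_of_pos h1 m) (Real.rpow_pos_of_pos h2 m)
  have hG := Grec m k hx
  rw [Gconv m k hx, Gconv m (k+1) hx, Gconv m (k+2) hx] at hG
  have hfac : ((-1:ℝ)^k * 2^k * (Nat.factorial k : ℝ) * ((1-x)^(m:ℝ) * (1+x)^(m:ℝ))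
      * (-2) * ((k:ℝ)+1)) ≠ 0 := by
    have : ((-1:ℝ)^k) ≠ 0 := by positivity
    have h2k : ((2:ℝ)^k) ≠ 0 := by positivity
    have hfk : ((Nat.factorial k : ℝ)) ≠ 0 := Nat.cast_ne_zero.mpr (Nat.factorial_ne_zero k)
    have hk1 : ((k:ℝ)+1) ≠ 0 := by positivity
    positivity
  apply mul_left_cancel₀ hfac
  push_cast [pow_succ, Nat.factorial_succ] at hG ⊢
  linear_combination (1/2 : ℝ) * hG

lemma Prec0 (m : ℝ) {x : ℝ} (hx : x ∈ Ioo (-1:ℝ) 1) :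
    (m+1) * (x * jacobiP 0 m m x) = jacobiP 1 m m x := by
  have hA := lemA m 0 hx
  rw [Gconv m 0 hx, Gconv m 1 hx] at hA
  have h1 : (0:ℝ) < 1 - x := by linarith [hx.2]
  have h2 : (0:ℝ) < 1 + x := by linarith [hx.1]
  have hW : (0:ℝ) < (1-x)^(m:ℝ) * (1+x)^(m:ℝ) :=
    mul_pos (Real.rpow_pos_of_pos h1 m) (Real.rpow_pos_of_pos h2 m)
  have hfac : ((-2:ℝ) * ((1-x)^(m:ℝ) * (1+x)^(m:ℝ))) ≠ 0 := by positivity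
  apply mul_left_cancel₀ hfac
  norm_num [Nat.factorial] at hA
  linear_combination hA

lemma sqrt_eq_of_sq {a b : ℝ} (ha : 0 ≤ a) (hb : 0 ≤ b) (h : a^2 = b^2) : a = b := by
  rw [← Real.sqrt_sq ha, h, Real.sqrt_sq hb]

lemma const1 (m n : ℝ) (hm : 0 ≤ m) (hn : 0 ≤ n) :
    αX (m+n+1/2) m * cX (m+n+1/2+1) m
      = cX (m+n+1/2) m * ((n+1)*(2*m+n+1)/((m+n+1)*(2*m+2*n+1))) := by
  have hg1 : 0 < Real.Gamma (n+1) := Real.Gamma_pos_of_pos (by linarith)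
  have hg2 : 0 < Real.Gamma (2*m+n+1) := Real.Gamma_pos_of_pos (by linarith)
  have hg3 : 0 < Real.Gamma (m+n+1) := Real.Gamma_pos_of_pos (by linarith)
  have hl : (0:ℝ) < m+n+1/2 := by linarith
  have h2m : (0:ℝ) < (2:ℝ)^m := Real.rpow_pos_of_pos (by norm_num) m
  rw [αX, cX, cX]
  rw [show m+n+1/2 - m + 1/2 = n+1 by ring, show m+n+1/2 + m + 1/2 = 2*m+n+1 by ring,
    show m+n+1/2 + 1/2 = m+n+1 by ring,
    show m+n+1/2+1 - m + 1/2 = (n+1)+1 by ring,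
    show m+n+1/2+1 + m + 1/2 = (2*m+n+1)+1 by ring,
    show m+n+1/2+1 + 1/2 = (m+n+1)+1 by ring,
    Real.Gamma_add_one (by positivity : (n+1) ≠ 0),
    Real.Gamma_add_one (by positivity : (2*m+n+1) ≠ 0),
    Real.Gamma_add_one (by positivity : (m+n+1) ≠ 0)]
  apply sqrt_eq_of_sq
  · apply mul_nonneg (Real.sqrt_nonneg _)
    exact div_nonneg (Real.sqrt_nonneg _) (by positivity)
  · apply mul_nonneg (div_nonneg (Real.sqrt_nonneg _) (by positivity)) (by positivity)
  · rw [mul_pow, mul_pow, div_pow, div_pow,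
      Real.sq_sqrt (by positivity), Real.sq_sqrt (by positivity),
      Real.sq_sqrt (by positivity)]
    field_simp
    ring

lemma const2 (m n : ℝ) (hm : 0 ≤ m) (hn : 1 ≤ n) :
    αX (m+n+1/2-1) m * cX (m+n+1/2-1) m
      = cX (m+n+1/2) m * ((m+n)/(2*m+2*n+1)) := by
  have hg1 : 0 < Real.Gamma n := Real.Gamma_pos_of_pos (by linarith)
  have hg2 : 0 < Real.Gamma (2*m+n) := Real.Gamma_pos_of_pos (by linarith)
  have hg3 : 0 < Real.Gamma (m+n) := Real.Gamma_pos_of_pos (by linarith)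
  have hl' : (0:ℝ) < m+n+1/2-1 := by linarith
  have h2m : (0:ℝ) < (2:ℝ)^m := Real.rpow_pos_of_pos (by norm_num) m
  rw [αX, cX, cX]
  rw [show m+n+1/2-1 - m + 1/2 = n by ring, show m+n+1/2-1 + m + 1/2 = 2*m+n by ring,
    show m+n+1/2-1 + 1/2 = m+n by ring,
    show m+n+1/2 - m + 1/2 = n+1 by ring,
    show m+n+1/2 + m + 1/2 = (2*m+n)+1 by ring,
    show m+n+1/2 + 1/2 = (m+n)+1 by ring,
    Real.Gamma_add_one (by positivity : (n:ℝ) ≠ 0),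
    Real.Gamma_add_one (by positivity : (2*m+n) ≠ 0),
    Real.Gamma_add_one (by positivity : (m+n) ≠ 0)]
  apply sqrt_eq_of_sq
  · apply mul_nonneg (Real.sqrt_nonneg _)
    exact div_nonneg (Real.sqrt_nonneg _) (by positivity)
  · apply mul_nonneg (div_nonneg (Real.sqrt_nonneg _) (by positivity)) (by positivity)
  · rw [mul_pow, mul_pow, div_pow, div_pow,
      Real.sq_sqrt (by positivity), Real.sq_sqrt (by positivity),
      Real.sq_sqrt (by positivity)]
    have hmn : (0:ℝ) < m + n := by linarith
    rw [div_mul_div_comm, div_pow, div_mul_div_comm,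
      div_eq_div_iff (by positivity) (by positivity)]
    ring

/-- Three-term recurrence for the ultraspherical functions `X̃_{ℓ,m}^d`:
`x X̃_{ℓ,m}^d(x) = α_{ℓ,m} X̃_{ℓ+1,m}^d(x) + α_{ℓ-1,m} X̃_{ℓ-1,m}^d(x)`,
for `ℓ ∈ ℕ + (d-1)/2`, `m ∈ ℕ + (d-2)/2`, `ℓ ≥ m` (in the degenerate case
`ℓ - m = 1/2` the coefficient `α_{ℓ-1,m}` vanishes). -/
theorem tX_three_term_recurrence (d : ℕ) (hd : 2 ≤ d) (a b : ℕ)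
    (ℓ m : ℝ) (hℓ : ℓ = (a : ℝ) + ((d : ℝ) - 1) / 2)
    (hm : m = (b : ℝ) + ((d : ℝ) - 2) / 2) (hml : m ≤ ℓ)
    (x : ℝ) (hx : x ∈ Set.Ioo (-1 : ℝ) 1) :
    x * tX d ℓ m x = αX ℓ m * tX d (ℓ + 1) m x + αX (ℓ - 1) m * tX d (ℓ - 1) m x := by
  have hd2 : (2:ℝ) ≤ (d:ℝ) := by exact_mod_cast hd
  have hm0 : 0 ≤ m := by rw [hm]; have := Nat.cast_nonneg (α := ℝ) b; linarith
  have hba : b ≤ a := by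
    by_contra hc
    push_neg at hc
    have : ((a:ℝ)) + 1 ≤ (b:ℝ) := by exact_mod_cast hc
    rw [hm, hℓ] at hml; linarith
  set n : ℕ := a - b with hn
  have hN : ((n:ℕ):ℝ) = (a:ℝ) - (b:ℝ) := by
    rw [hn]; exact Nat.cast_sub hba
  have hlm : ℓ = m + (n:ℝ) + 1/2 := by rw [hℓ, hm, hN]; ring
  have f1 : ⌊ℓ - m - 1/2⌋₊ = n := by
    rw [show ℓ - m - 1/2 = ((n:ℕ):ℝ) by rw [hlm]; ring]
    exact Nat.floor_natCast n
  have f2 : ⌊ℓ + 1 - m - 1/2⌋₊ = n + 1 := by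
    rw [show ℓ + 1 - m - 1/2 = ((n+1:ℕ):ℝ) by push_cast; rw [hlm]; ring]
    exact Nat.floor_natCast (n+1)
  rw [tX, tX, tX, f1, f2]
  set w := (1 - x^2) ^ (m / 2 - ((d:ℝ) - 2) / 4) with hw
  rcases Nat.eq_zero_or_pos n with hn0 | hnpos
  · -- degenerate case n = 0
    have hz : αX (ℓ - 1) m = 0 := by
      rw [αX, show ℓ - 1 - m + 1/2 = 0 by rw [hlm, hn0]; push_cast; ring]
      simp
    rw [hz, zero_mul, add_zero]
    have hI1 : αX ℓ m * cX (ℓ+1) m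
        = cX ℓ m * (((0:ℝ)+1)*(2*m+0+1)/((m+0+1)*(2*m+2*0+1))) := by
      have h := const1 m 0 hm0 le_rfl
      rw [show m+(0:ℝ)+1/2 = ℓ by rw [hlm, hn0]; push_cast; ring] at h
      exact h
    have hP0 := Prec0 m hx
    rw [hn0]
    rw [show αX ℓ m * (cX (ℓ+1) m * w * jacobiP (0+1) m m x)
        = (αX ℓ m * cX (ℓ+1) m) * (w * jacobiP 1 m m x) by norm_num; ring, hI1]
    have hd1 : (m+1) ≠ 0 := by positivity
    have hd2' : (2*m+1) ≠ 0 := by positivity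
    field_simp
    linear_combination (cX ℓ m * w * (2*m+1)) * hP0
  · -- main case n = k + 1
    obtain ⟨k, hk⟩ : ∃ k, n = k + 1 := ⟨n - 1, (Nat.succ_pred_eq_of_pos hnpos).symm⟩
    have f3 : ⌊ℓ - 1 - m - 1/2⌋₊ = k := by
      rw [show ℓ - 1 - m - 1/2 = ((k:ℕ):ℝ) by rw [hlm, hk]; push_cast; ring]
      exact Nat.floor_natCast k
    rw [f3]
    have hkc : ((n:ℕ):ℝ) = (k:ℝ) + 1 := by rw [hk]; push_cast; ring
    have hI1 : αX ℓ m * cX (ℓ+1) m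
        = cX ℓ m * (((k:ℝ)+2)*(2*m+(k:ℝ)+2)/((m+(k:ℝ)+2)*(2*m+2*(k:ℝ)+3))) := by
      have h := const1 m ((k:ℝ)+1) hm0 (by positivity)
      rw [show m+((k:ℝ)+1)+1/2 = ℓ from by rw [hlm, hkc]] at h
      rw [h]; ring
    have hI2 : αX (ℓ-1) m * cX (ℓ-1) m
        = cX ℓ m * ((m+(k:ℝ)+1)/(2*m+2*(k:ℝ)+3)) := by
      have h := const2 m ((k:ℝ)+1) hm0 (by linarith [Nat.cast_nonneg (α := ℝ) k])
      rw [show m+((k:ℝ)+1)+1/2 = ℓ from by rw [hlm, hkc]] at h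
      rw [h]; ring
    have hP := Prec m k hx
    rw [hk]
    rw [show αX ℓ m * (cX (ℓ+1) m * w * jacobiP (k+1+1) m m x)
        = (αX ℓ m * cX (ℓ+1) m) * (w * jacobiP (k+2) m m x) by ring_nf, hI1]
    rw [show αX (ℓ-1) m * (cX (ℓ-1) m * w * jacobiP k m m x)
        = (αX (ℓ-1) m * cX (ℓ-1) m) * (w * jacobiP k m m x) by ring, hI2]
    have hd1 : (m+(k:ℝ)+2) ≠ 0 := by positivity
    have hd2' : (2*m+2*(k:ℝ)+3) ≠ 0 := by positivity
    field_simp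
    linear_combination (cX ℓ m * w) * hP
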